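/- Let T be an (α,β)-normal operator on a complex Hilbert space, where 0 ≤ α ≤ 1 ≤ β. Then w(T)² ≥ max{1 + α², 1 + 1/β²}·‖T‖²/4 + |‖Re(T) + Im(T)‖² − ‖Re(T) − Im(T)‖²|/4. -/

import Mathlib

variable {H : Type*} [NormedAddCommGroup H] [InnerProductSpace ℂ H] [CompleteSpace H]

/-- The numerical radius of a bounded linear operator. -/
noncomputable def numRad (T : H →L[ℂ] H) : ℝ :=
  sSup {r : ℝ | ∃ x : H, ‖x‖ = 1 ∧ r = ‖(inner ℂ (T x) x : ℂ)‖}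

/-- The α-norm of a bounded linear operator. -/
noncomputable def alphaNorm (α : ℝ) (T : H →L[ℂ] H) : ℝ :=
  sSup {r : ℝ | ∃ x : H, ‖x‖ = 1 ∧
    r = Real.sqrt (α * (‖(inner ℂ (T x) x : ℂ)‖)^2 + (1 - α) * ‖T x‖^2)}

/-- `|T| = (T* T)^(1/2)`. -/
noncomputable def absOp (T : H →L[ℂ] H) : H →L[ℂ] H :=
  CFC.sqrt (ContinuousLinearMap.adjoint T * T)

/-- `|T*| = (T T*)^(1/2)`. -/
noncomputable def absAdj (T : H →L[ℂ] H) : H →L[ℂ] H :=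
  CFC.sqrt (T * ContinuousLinearMap.adjoint T)

/-- The real part `(A + A*)/2`. -/
noncomputable def reOp (A : H →L[ℂ] H) : H →L[ℂ] H :=
  (2:ℝ)⁻¹ • (A + ContinuousLinearMap.adjoint A)

/-- The imaginary part `(A - A*)/(2i)`. -/
noncomputable def imOp (A : H →L[ℂ] H) : H →L[ℂ] H :=
  ((2 * Complex.I)⁻¹ : ℂ) • (A - ContinuousLinearMap.adjoint A)

/-!
With `P = Re T + Im T = Re ((1 - i) T)` and `Q = Re T - Im T = Re ((1 + i) T)`, both self-adjoint,
`‖P‖, ‖Q‖ ≤ |1 ∓ i| w(T) = √2 w(T)`, since the norm of a self-adjoint operator is the supremum of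
its quadratic form. Moreover `P² + Q² = T*T + TT*`, while (α, β)-normality gives
`(1 + α²) T*T ≤ T*T + TT*` and `(1 + β⁻²) TT* ≤ T*T + TT*`. Since `‖T*T‖ = ‖TT*‖ = ‖T‖²` and the norm
is monotone on positive elements, `max (1 + α²) (1 + β⁻²) ‖T‖² ≤ ‖P‖² + ‖Q‖²`; adding
`|‖P‖² - ‖Q‖²|` leaves `2 max (‖P‖², ‖Q‖²) ≤ 4 w(T)²`.
-/

open ContinuousLinearMap ComplexStarModule
open scoped InnerProductSpace

theorem IsSelfAdjoint.norm_le_of_forall_abs_re_inner_le {𝕜 E : Type*} [RCLike 𝕜]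
    [NormedAddCommGroup E] [InnerProductSpace 𝕜 E] [CompleteSpace E] {S : E →L[𝕜] E}
    (hS : IsSelfAdjoint S) {C : ℝ} (hC : 0 ≤ C)
    (h : ∀ x, |RCLike.re ⟪S x, x⟫_𝕜| ≤ C * ‖x‖ ^ 2) : ‖S‖ ≤ C := by
  rw [S.norm_eq_iSup_rayleighQuotient hS.isSymmetric]
  refine ciSup_le fun x => ?_
  rw [rayleighQuotient, abs_div, abs_sq, reApplyInnerSelf_apply]
  exact div_le_of_le_mul₀ (sq_nonneg _) hC (h x)

theorem inv_smul_le_of_le_smul {M : Type*} [AddCommGroup M] [PartialOrder M] [Module ℝ M]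
    [PosSMulMono ℝ M] [PosSMulReflectLE ℝ M] {a b : M} (ha : 0 ≤ a) {t : ℝ} (ht : 0 ≤ t)
    (h : b ≤ t • a) : t⁻¹ • b ≤ a := by
  rcases ht.eq_or_lt with rfl | ht
  · simpa using ha
  · exact (inv_smul_le_iff_of_pos ht).mpr h

section ComplexStarModule

variable {A : Type*} [AddCommGroup A] [Module ℂ A] [StarAddMonoid A] [StarModule ℂ A]

theorem realPart_one_sub_I_smul (a : A) : ℜ ((1 - Complex.I) • a) = ℜ a + ℑ a := by
  simp [realPart_smul]

theorem realPart_one_add_I_smul (a : A) : ℜ ((1 + Complex.I) • a) = ℜ a - ℑ a := by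
  simp [realPart_smul]

end ComplexStarModule

section CStarAlgebra

variable {A : Type*} [NonUnitalCStarAlgebra A]

theorem norm_star_mul_self_add_self_mul_star_le (a : A) :
    ‖star a * a + a * star a‖ ≤ ‖(ℜ a + ℑ a : A)‖ ^ 2 + ‖(ℜ a - ℑ a : A)‖ ^ 2 := by
  have norm_mul_self {x : A} (hx : IsSelfAdjoint x) : ‖x * x‖ = ‖x‖ ^ 2 := by
    rw [sq, ← CStarRing.norm_star_mul_self, hx.star_eq]
  have hre := (ℜ a).2
  have him := (ℑ a).2
  calc ‖star a * a + a * star a‖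
      = ‖(ℜ a + ℑ a : A) * (ℜ a + ℑ a) + (ℜ a - ℑ a : A) * (ℜ a - ℑ a)‖ := by
        rw [star_mul_self_add_self_mul_star]
        congr 1
        noncomm_ring
    _ ≤ _ := norm_add_le _ _
    _ = _ := by rw [norm_mul_self (hre.add him), norm_mul_self (hre.sub him)]

variable [PartialOrder A] [StarOrderedRing A]

theorem one_add_mul_norm_le_norm_add {a b : A} {c : ℝ} (ha : 0 ≤ a) (hc : 0 ≤ c)
    (hab : c • a ≤ b) : (1 + c) * ‖a‖ ≤ ‖a + b‖ := by
  have hle : (1 + c) • a ≤ a + b := by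
    rw [add_smul, one_smul]
    gcongr
  have h := CStarAlgebra.norm_le_norm_of_nonneg_of_le (smul_nonneg (by positivity) ha) hle
  rwa [norm_smul, Real.norm_of_nonneg (by positivity)] at h

end CStarAlgebra

section NumericalRadius

variable {E : Type*} [NormedAddCommGroup E] [InnerProductSpace ℂ E]

theorem numRad_nonneg (T : E →L[ℂ] E) : 0 ≤ numRad T :=
  Real.sSup_nonneg (by rintro r ⟨x, -, rfl⟩; positivity)

theorem numRad_le_of_forall_norm_inner_le {T : E →L[ℂ] E} {C : ℝ} (hC : 0 ≤ C)
    (h : ∀ x, ‖⟪T x, x⟫_ℂ‖ ≤ C * ‖x‖ ^ 2) : numRad T ≤ C :=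
  Real.sSup_le (by rintro r ⟨x, hx, rfl⟩; simpa [hx] using h x) hC

theorem norm_inner_le_numRad (T : E →L[ℂ] E) {x : E} (hx : ‖x‖ = 1) :
    ‖⟪T x, x⟫_ℂ‖ ≤ numRad T := by
  refine le_csSup ⟨‖T‖, ?_⟩ ⟨x, hx, rfl⟩
  rintro r ⟨y, hy, rfl⟩
  simpa [hy] using (norm_inner_le_norm (𝕜 := ℂ) (T y) y).trans
    (mul_le_mul_of_nonneg_right (T.le_opNorm y) (norm_nonneg y))

theorem norm_inner_le_numRad_mul_sq (T : E →L[ℂ] E) (x : E) :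
    ‖⟪T x, x⟫_ℂ‖ ≤ numRad T * ‖x‖ ^ 2 := by
  rcases eq_or_ne x 0 with rfl | hx
  · simp
  have hx' : ‖x‖ ≠ 0 := norm_ne_zero_iff.mpr hx
  have h := norm_inner_le_numRad T (x := ((‖x‖⁻¹ : ℝ) : ℂ) • x) (by simp [norm_smul, hx'])
  rw [map_smul, inner_smul_left, inner_smul_right, norm_mul, norm_mul] at h
  simp only [norm_inv, norm_norm, Complex.norm_conj, Complex.norm_real] at h
  rwa [← mul_assoc, ← sq, inv_pow, inv_mul_le_iff₀ (by positivity), mul_comm] at h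

theorem numRad_smul_le (c : ℂ) (T : E →L[ℂ] E) : numRad (c • T) ≤ ‖c‖ * numRad T :=
  numRad_le_of_forall_norm_inner_le (by positivity [numRad_nonneg T]) fun x => by
    rw [smul_apply, inner_smul_left, norm_mul, Complex.norm_conj, mul_assoc]
    gcongr
    exact norm_inner_le_numRad_mul_sq T x

end NumericalRadius

theorem reOp_eq_realPart (T : H →L[ℂ] H) : reOp T = ℜ T := by
  rw [reOp, realPart_apply_coe, star_eq_adjoint]

theorem imOp_eq_imaginaryPart (T : H →L[ℂ] H) : imOp T = ℑ T := by
  rw [imOp, imaginaryPart_apply_coe, star_eq_adjoint]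
  match_scalars <;> rw [mul_inv, Complex.inv_I] <;> ring

theorem re_inner_realPart_apply (T : H →L[ℂ] H) (x : H) :
    (⟪(ℜ T : H →L[ℂ] H) x, x⟫_ℂ).re = (⟪T x, x⟫_ℂ).re := by
  rw [realPart_apply_coe, smul_apply, add_apply, star_eq_adjoint,
    RCLike.real_smul_eq_coe_smul (K := ℂ), inner_smul_left, inner_add_left, adjoint_inner_left,
    ← inner_conj_symm x (T x), Complex.add_conj]
  simp

theorem norm_realPart_le_numRad (T : H →L[ℂ] H) : ‖(ℜ T : H →L[ℂ] H)‖ ≤ numRad T :=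
  (ℜ T).2.norm_le_of_forall_abs_re_inner_le (numRad_nonneg T) fun x => by
    rw [RCLike.re_to_complex, re_inner_realPart_apply]
    exact (Complex.abs_re_le_norm _).trans (norm_inner_le_numRad_mul_sq T x)

theorem sq_norm_realPart_smul_le (c : ℂ) (T : H →L[ℂ] H) :
    ‖(ℜ (c • T) : H →L[ℂ] H)‖ ^ 2 ≤ ‖c‖ ^ 2 * numRad T ^ 2 := by
  rw [← mul_pow]
  exact pow_le_pow_left₀ (norm_nonneg _)
    ((norm_realPart_le_numRad _).trans (numRad_smul_le c T)) 2

theorem sq_norm_reOp_add_imOp_le (T : H →L[ℂ] H) :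
    ‖reOp T + imOp T‖ ^ 2 ≤ 2 * numRad T ^ 2 := by
  convert sq_norm_realPart_smul_le (1 - Complex.I) T using 2
  · rw [realPart_one_sub_I_smul, reOp_eq_realPart, imOp_eq_imaginaryPart]
    rfl
  · rw [Complex.sq_norm, Complex.normSq_apply]
    norm_num

theorem sq_norm_reOp_sub_imOp_le (T : H →L[ℂ] H) :
    ‖reOp T - imOp T‖ ^ 2 ≤ 2 * numRad T ^ 2 := by
  convert sq_norm_realPart_smul_le (1 + Complex.I) T using 2
  · rw [realPart_one_add_I_smul, reOp_eq_realPart, imOp_eq_imaginaryPart]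
    rfl
  · rw [Complex.sq_norm, Complex.normSq_apply]
    norm_num

theorem norm_adjoint_mul_self_add_le (T : H →L[ℂ] H) :
    ‖adjoint T * T + T * adjoint T‖ ≤ ‖reOp T + imOp T‖ ^ 2 + ‖reOp T - imOp T‖ ^ 2 := by
  rw [reOp_eq_realPart, imOp_eq_imaginaryPart, ← star_eq_adjoint]
  exact norm_star_mul_self_add_self_mul_star_le T

theorem numRad_sq_ge_of_alphaBetaNormal'_general (T : H →L[ℂ] H) (α β : ℝ)
    (h1 : (α^2 : ℝ) • (ContinuousLinearMap.adjoint T * T) ≤ T * ContinuousLinearMap.adjoint T)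
    (h2 : T * ContinuousLinearMap.adjoint T ≤ (β^2 : ℝ) • (ContinuousLinearMap.adjoint T * T)) :
    (numRad T)^2 ≥ max (1 + α^2) (1 + 1/β^2) * ‖T‖^2 / 4 +
      |‖reOp T + imOp T‖^2 - ‖reOp T - imOp T‖^2| / 4 := by
  have norm_adjoint_mul_self : ‖adjoint T * T‖ = ‖T‖ ^ 2 := by
    rw [← star_eq_adjoint, CStarRing.norm_star_mul_self, sq]
  have norm_mul_adjoint_self : ‖T * adjoint T‖ = ‖T‖ ^ 2 := by
    rw [← star_eq_adjoint, CStarRing.norm_self_mul_star, sq]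
  have hsum : max (1 + α ^ 2) (1 + 1 / β ^ 2) * ‖T‖ ^ 2 ≤ ‖adjoint T * T + T * adjoint T‖ := by
    rw [max_mul_of_nonneg _ _ (sq_nonneg _)]
    refine max_le ?_ ?_
    · rw [← norm_adjoint_mul_self]
      exact one_add_mul_norm_le_norm_add (star_mul_self_nonneg T) (sq_nonneg α) h1
    · rw [← norm_mul_adjoint_self, add_comm (adjoint T * T), one_div]
      exact one_add_mul_norm_le_norm_add (mul_star_self_nonneg T) (by positivity)
        (inv_smul_le_of_le_smul (star_mul_self_nonneg T) (sq_nonneg β) h2)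
  have hPQ := norm_adjoint_mul_self_add_le T
  have hP := sq_norm_reOp_add_imOp_le T
  have hQ := sq_norm_reOp_sub_imOp_le T
  rcases abs_cases (‖reOp T + imOp T‖ ^ 2 - ‖reOp T - imOp T‖ ^ 2) with ⟨h, -⟩ | ⟨h, -⟩ <;>
    rw [h] <;> linarith

theorem numRad_sq_ge_of_alphaBetaNormal' (T : H →L[ℂ] H) (α β : ℝ)
    (hα0 : 0 ≤ α) (hα1 : α ≤ 1) (hβ : 1 ≤ β)
    (h1 : (α^2 : ℝ) • (ContinuousLinearMap.adjoint T * T) ≤ T * ContinuousLinearMap.adjoint T)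
    (h2 : T * ContinuousLinearMap.adjoint T ≤ (β^2 : ℝ) • (ContinuousLinearMap.adjoint T * T)) :
    (numRad T)^2 ≥ max (1 + α^2) (1 + 1/β^2) * ‖T‖^2 / 4 +
      |‖reOp T + imOp T‖^2 - ‖reOp T - imOp T‖^2| / 4 :=
  numRad_sq_ge_of_alphaBetaNormal'_general T α β h1 h2
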